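/- arXiv:2009.13891 — 2 statements merged into one kernel-verified Lean document; each statement's English description precedes it below -/
import Mathlib

section
/- Let X and Y be nonempty finite types and let p : X × Y → ℝ be a probability mass function with p(x,y) > 0 for all (x,y), with marginals p_X(x) = Σ_y p(x,y) and p_Y(y) = Σ_x p(x,y), and mutual information I(X;Y) = Σ_{(x,y)} p(x,y) · log( p(x,y) / (p_X(x)·p_Y(y)) ). Fix an integer W ≥ 2 and any critic function f : X × Y → ℝ. Define the InfoNCE loss with one positive and W−1 i.i.d. negative samples as L_NCE = − Σ_{x,y₁} p(x,y₁) Σ_{y₂,…,y_W} (∏_{j=2}^{W} p_Y(y_j)) · log( exp(f(x,y₁)) / Σ_{j=1}^{W} exp(f(x,y_j)) ). Then I(X;Y) ≥ log W − L_NCE. -/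
/-!
Write `s = e^{f(x,y₁)} / ∑ⱼ e^{f(x,yⱼ)}` for the softmax weight of the positive sample and
`r = p(x,y₁) / (p_X(x) p_Y(y₁))` for the density ratio. The pointwise inequality
`log (W s) ≤ log r + W s / r - 1` (that is, `log t ≤ t - 1`) gives, after taking expectations,
`log W - L_NCE ≤ I(X;Y) + 𝔼[W s / r] - 1`. Dividing by `r` turns the sampling law of `(x, y₁)`
into `p_X ⊗ p_Y`, under which `y₁, …, y_W` are exchangeable; the `W` softmax weights sum to one,
so each has expectation `1 / W` and `𝔼[W s / r] = 1`.
-/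

open Finset

noncomputable section

def softmax {ι : Type*} [Fintype ι] (v : ι → ℝ) (i : ι) : ℝ :=
  Real.exp (v i) / ∑ j, Real.exp (v j)

section Softmax

variable {ι : Type*} [Fintype ι]

theorem softmax_comp_equiv (v : ι → ℝ) (σ : ι ≃ ι) (i : ι) :
    softmax (v ∘ σ) i = softmax v (σ i) := by
  simp only [softmax, Function.comp_apply, Equiv.sum_comp σ fun j => Real.exp (v j)]

theorem sum_softmax [Nonempty ι] (v : ι → ℝ) : ∑ i, softmax v i = 1 := by
  simp only [softmax, ← sum_div]
  exact div_self (sum_pos (fun j _ => Real.exp_pos (v j)) univ_nonempty).ne'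

variable [DecidableEq ι] {Y : Type*} [Fintype Y]

theorem sum_pi_prod_eq_pow (w : Y → ℝ) :
    ∑ z : ι → Y, ∏ j, w (z j) = (∑ y, w y) ^ Fintype.card ι := by
  rw [← Fintype.prod_sum (fun (_ : ι) y => w y), prod_const, card_univ]

theorem sum_pi_prod_mul_softmax_comp_eq (w v : Y → ℝ) (i k : ι) :
    ∑ z : ι → Y, (∏ j, w (z j)) * softmax (v ∘ z) i =
      ∑ z : ι → Y, (∏ j, w (z j)) * softmax (v ∘ z) k := by
  rw [← ((Equiv.swap i k).arrowCongr (Equiv.refl Y)).sum_comp]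
  refine Fintype.sum_congr _ _ fun z => ?_
  have hz : (Equiv.swap i k).arrowCongr (Equiv.refl Y) z = z ∘ Equiv.swap i k := rfl
  simp only [hz, Function.comp_apply]
  rw [Equiv.prod_comp (Equiv.swap i k) fun j => w (z j), ← Function.comp_assoc,
    softmax_comp_equiv, Equiv.swap_apply_left]

theorem card_mul_sum_pi_prod_mul_softmax_comp (w v : Y → ℝ) (i : ι) :
    Fintype.card ι * ∑ z : ι → Y, (∏ j, w (z j)) * softmax (v ∘ z) i =
      (∑ y, w y) ^ Fintype.card ι := by
  have : Nonempty ι := ⟨i⟩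
  calc (Fintype.card ι : ℝ) * ∑ z : ι → Y, (∏ j, w (z j)) * softmax (v ∘ z) i
      = ∑ k : ι, ∑ z : ι → Y, (∏ j, w (z j)) * softmax (v ∘ z) k := by
        rw [sum_congr rfl fun k _ => sum_pi_prod_mul_softmax_comp_eq w v k i, sum_const,
          card_univ, nsmul_eq_mul]
    _ = ∑ z : ι → Y, ∏ j, w (z j) := by
        rw [sum_comm]
        simp only [← mul_sum, sum_softmax, mul_one]
    _ = (∑ y, w y) ^ Fintype.card ι := sum_pi_prod_eq_pow w

end Softmax

theorem succ_mul_sum_mul_sum_pi_prod_mul_exp_div {Y : Type*} [Fintype Y] (w v : Y → ℝ)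
    (n : ℕ) :
    (n + 1) * ∑ y, w y * ∑ ys : Fin n → Y,
        (∏ j, w (ys j)) * (Real.exp (v y) / (Real.exp (v y) + ∑ j, Real.exp (v (ys j)))) =
      (∑ y, w y) ^ (n + 1) := by
  have h := card_mul_sum_pi_prod_mul_softmax_comp w v (0 : Fin (n + 1))
  rw [← (Fin.consEquiv fun _ => Y).sum_comp, Fintype.sum_prod_type] at h
  simpa [softmax, Fin.prod_univ_succ, Fin.sum_univ_succ, mul_sum, mul_assoc] using h

theorem Real.log_le_log_div_add_mul_div_sub_one {u a b : ℝ} (hu : 0 < u) (ha : 0 < a)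
    (hb : 0 < b) : Real.log u ≤ Real.log (a / b) + u * b / a - 1 := by
  have h := Real.log_le_sub_one_of_pos (show 0 < u * b / a by positivity)
  rw [Real.log_div (by positivity) ha.ne', Real.log_mul hu.ne' hb.ne'] at h
  rw [Real.log_div ha.ne' hb.ne']
  linarith

section ContrastiveExpect

variable {X Y : Type*} [Fintype X] [Fintype Y]

/-- `𝔼[F x y₁ ys]` for the positive pair `(x, y₁) ∼ p` and `n` negatives `ys j` i.i.d. `∼ q`. -/
def contrastiveExpect (p : X × Y → ℝ) (q : Y → ℝ) (n : ℕ)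
    (F : X → Y → (Fin n → Y) → ℝ) : ℝ :=
  ∑ x, ∑ y₁, p (x, y₁) * ∑ ys : Fin n → Y, (∏ j, q (ys j)) * F x y₁ ys

variable {p : X × Y → ℝ} {q : Y → ℝ} {n : ℕ}

theorem contrastiveExpect_add (F G : X → Y → (Fin n → Y) → ℝ) :
    contrastiveExpect p q n (fun x y ys => F x y ys + G x y ys) =
      contrastiveExpect p q n F + contrastiveExpect p q n G := by
  simp only [contrastiveExpect, mul_add, sum_add_distrib]

theorem contrastiveExpect_sub (F G : X → Y → (Fin n → Y) → ℝ) :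
    contrastiveExpect p q n (fun x y ys => F x y ys - G x y ys) =
      contrastiveExpect p q n F - contrastiveExpect p q n G := by
  simp only [contrastiveExpect, mul_sub, sum_sub_distrib]

theorem contrastiveExpect_mono (hp : ∀ xy, 0 ≤ p xy) (hq : ∀ y, 0 ≤ q y)
    {F G : X → Y → (Fin n → Y) → ℝ} (h : ∀ x y ys, F x y ys ≤ G x y ys) :
    contrastiveExpect p q n F ≤ contrastiveExpect p q n G := by
  unfold contrastiveExpect
  gcongr with x _ y _ ys _
  · exact hp _
  · exact prod_nonneg fun j _ => hq _
  · exact h x y ys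

theorem contrastiveExpect_eq_sum_of_pair (hq : ∑ y, q y = 1) (F : X → Y → ℝ) :
    contrastiveExpect p q n (fun x y _ => F x y) = ∑ x, ∑ y, p (x, y) * F x y := by
  simp only [contrastiveExpect, ← sum_mul, sum_pi_prod_eq_pow, hq, one_pow, one_mul]

theorem contrastiveExpect_const (hp : ∑ xy, p xy = 1) (hq : ∑ y, q y = 1) (c : ℝ) :
    contrastiveExpect p q n (fun _ _ _ => c) = c := by
  rw [contrastiveExpect_eq_sum_of_pair hq]
  simp only [← sum_mul]
  rw [← Fintype.sum_prod_type (f := p), hp, one_mul]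

/-- The Nguyen–Wainwright–Jordan variational bound, with `b` playing the role of the
product of the marginals. -/
theorem contrastiveExpect_log_le (hp_pos : ∀ xy, 0 < p xy) (hp_sum : ∑ xy, p xy = 1)
    (hq_nonneg : ∀ y, 0 ≤ q y) (hq_sum : ∑ y, q y = 1) {b : X → Y → ℝ}
    (hb : ∀ x y, 0 < b x y) {u : X → Y → (Fin n → Y) → ℝ} (hu : ∀ x y ys, 0 < u x y ys) :
    contrastiveExpect p q n (fun x y ys => Real.log (u x y ys)) ≤
      ∑ x, ∑ y, p (x, y) * Real.log (p (x, y) / b x y) +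
        contrastiveExpect p q n (fun x y ys => u x y ys * b x y / p (x, y)) - 1 := by
  calc contrastiveExpect p q n (fun x y ys => Real.log (u x y ys))
      ≤ contrastiveExpect p q n (fun x y ys =>
          Real.log (p (x, y) / b x y) + u x y ys * b x y / p (x, y) - 1) :=
        contrastiveExpect_mono (fun xy => (hp_pos xy).le) hq_nonneg fun x y ys =>
          Real.log_le_log_div_add_mul_div_sub_one (hu x y ys) (hp_pos _) (hb x y)
    _ = _ := by
        rw [contrastiveExpect_sub, contrastiveExpect_add,
          contrastiveExpect_eq_sum_of_pair hq_sum, contrastiveExpect_const hp_sum hq_sum]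

theorem contrastiveExpect_mul_mul_div (hp : ∀ xy, p xy ≠ 0) (a : X → ℝ)
    (G : X → Y → (Fin n → Y) → ℝ) :
    contrastiveExpect p q n (fun x y ys => G x y ys * (a x * q y) / p (x, y)) =
      ∑ x, a x * ∑ y, q y * ∑ ys : Fin n → Y, (∏ j, q (ys j)) * G x y ys := by
  simp only [contrastiveExpect, mul_sum]
  refine sum_congr rfl fun x _ => sum_congr rfl fun y _ => sum_congr rfl fun ys _ => ?_
  field_simp [hp (x, y)]

theorem contrastiveExpect_succ_mul_exp_div_mul_mul_div (hp : ∀ xy, p xy ≠ 0)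
    (hq : ∑ y, q y = 1) (a : X → ℝ) (v : X → Y → ℝ) :
    contrastiveExpect p q n (fun x y ys =>
        (n + 1) * (Real.exp (v x y) / (Real.exp (v x y) + ∑ j, Real.exp (v x (ys j)))) *
          (a x * q y) / p (x, y)) =
      ∑ x, a x := by
  rw [contrastiveExpect_mul_mul_div hp]
  refine sum_congr rfl fun x _ => ?_
  have h := succ_mul_sum_mul_sum_pi_prod_mul_exp_div q (v x) n
  rw [hq, one_pow] at h
  simp only [mul_left_comm _ ((n : ℝ) + 1), ← mul_sum, h, mul_one]

end ContrastiveExpect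

end

theorem infoNCE_lower_bound_general
    {X Y : Type*} [Fintype X] [Fintype Y]
    (p : X × Y → ℝ)
    (hp_pos : ∀ xy : X × Y, 0 < p xy)
    (hp_sum : ∑ xy : X × Y, p xy = 1)
    (pX : X → ℝ) (hpX : ∀ x, pX x = ∑ y, p (x, y))
    (pY : Y → ℝ) (hpY : ∀ y, pY y = ∑ x, p (x, y))
    (I : ℝ)
    (hI : I = ∑ x, ∑ y, p (x, y) * Real.log (p (x, y) / (pX x * pY y)))
    (W : ℕ) (hW : 2 ≤ W)
    (f : X × Y → ℝ)
    (L : ℝ)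
    (hL : L = - ∑ x, ∑ y₁, p (x, y₁) *
        ∑ ys : Fin (W - 1) → Y, (∏ j, pY (ys j)) *
          Real.log (Real.exp (f (x, y₁)) /
            (Real.exp (f (x, y₁)) + ∑ j, Real.exp (f (x, ys j))))) :
    Real.log W - L ≤ I := by
  set n := W - 1
  have hWn : (W : ℝ) = n + 1 := by rw [← Nat.cast_add_one, Nat.sub_add_cancel (by omega)]
  set s : X → Y → (Fin n → Y) → ℝ := fun x y₁ ys =>
    Real.exp (f (x, y₁)) / (Real.exp (f (x, y₁)) + ∑ j, Real.exp (f (x, ys j)))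
  have hpX_sum : ∑ x, pX x = 1 := by simp only [hpX, ← Fintype.sum_prod_type, hp_sum]
  have hpY_sum : ∑ y, pY y = 1 := by simp only [hpY, ← Fintype.sum_prod_type_right, hp_sum]
  have hpY_nonneg y : 0 ≤ pY y := (hpY y).symm ▸ sum_nonneg fun x _ => (hp_pos _).le
  have hpX_pos x y : 0 < pX x := hpX x ▸
    (hp_pos (x, y)).trans_le (single_le_sum (fun y _ => (hp_pos _).le) (mem_univ y))
  have hpY_pos x y : 0 < pY y := hpY y ▸
    (hp_pos (x, y)).trans_le (single_le_sum (f := fun x => p (x, y)) (fun x _ => (hp_pos _).le)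
      (mem_univ x))
  have hW_pos : (0 : ℝ) < W := by rw [hWn]; positivity
  calc Real.log W - L
      = contrastiveExpect p pY n (fun x y ys => Real.log (W * s x y ys)) := by
        simp only [Real.log_mul hW_pos.ne' (by positivity : s _ _ _ ≠ 0)]
        rw [contrastiveExpect_add, contrastiveExpect_const hp_sum hpY_sum, hL]
        simp only [contrastiveExpect, s]
        ring
    _ ≤ I + contrastiveExpect p pY n (fun x y ys => W * s x y ys * (pX x * pY y) / p (x, y))
          - 1 := by
        rw [hI]
        exact contrastiveExpect_log_le hp_pos hp_sum hpY_nonneg hpY_sum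
          (fun x y => mul_pos (hpX_pos x y) (hpY_pos x y)) fun x y ys => by positivity
    _ = I := by
        rw [hWn, contrastiveExpect_succ_mul_exp_div_mul_mul_div (fun xy => (hp_pos xy).ne')
          hpY_sum, hpX_sum]
        ring

/-- The multi-sample InfoNCE lower bound on mutual information:
for a strictly positive pmf `p` on `X × Y` with marginals `pX`, `pY`, mutual
information `I`, any critic `f` and `W ≥ 2` samples (one positive, `W − 1`
i.i.d. negatives drawn from `pY`), the InfoNCE loss `L` satisfies
`I ≥ log W − L`. -/
theorem infoNCE_lower_bound
    {X Y : Type*} [Fintype X] [Fintype Y] [Nonempty X] [Nonempty Y]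
    (p : X × Y → ℝ)
    (hp_pos : ∀ xy : X × Y, 0 < p xy)
    (hp_sum : ∑ xy : X × Y, p xy = 1)
    (pX : X → ℝ) (hpX : ∀ x, pX x = ∑ y, p (x, y))
    (pY : Y → ℝ) (hpY : ∀ y, pY y = ∑ x, p (x, y))
    (I : ℝ)
    (hI : I = ∑ x, ∑ y, p (x, y) * Real.log (p (x, y) / (pX x * pY y)))
    (W : ℕ) (hW : 2 ≤ W)
    (f : X × Y → ℝ)
    (L : ℝ)
    (hL : L = - ∑ x, ∑ y₁, p (x, y₁) *
        ∑ ys : Fin (W - 1) → Y, (∏ j, pY (ys j)) *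
          Real.log (Real.exp (f (x, y₁)) /
            (Real.exp (f (x, y₁)) + ∑ j, Real.exp (f (x, ys j))))) :
    Real.log W - L ≤ I :=
  infoNCE_lower_bound_general p hp_pos hp_sum pX hpX pY hpY I hI W hW f L hL
end

section
/- Let X and Y be nonempty finite types and let p : X × Y → ℝ be a probability mass function with p(x,y) > 0 for all (x,y), with marginals p_X(x) = Σ_y p(x,y) and p_Y(y) = Σ_x p(x,y), mutual information I(X;Y) = Σ_{(x,y)} p(x,y) · log( p(x,y) / (p_X(x)·p_Y(y)) ), and optimal critic (density ratio) g(x,y) = p(x,y) / (p_X(x)·p_Y(y)). Fix an integer W ≥ 2 and define L_upper = − Σ_{x,y⁺} p(x,y⁺) Σ_{y₁,…,y_{W−1}} (∏_{j=1}^{W−1} p_Y(y_j)) · log( g(x,y⁺) / Σ_{j=1}^{W−1} g(x,y_j) ), i.e. the contrastive loss whose denominator ranges only over the W−1 i.i.d. negative samples. Then I(X;Y) ≤ log W − L_upper (equivalently, L_upper ≤ −I(X;Y) + log W). -/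
/-!
Splitting the logarithm, `-L_upper = I - ∑ x, p_X x * E_x`, where `E_x` is the expected log of the
denominator `∑ j, g (x, y_j)` over i.i.d. `y_j ∼ p_Y`. Each `g (x, y_j)` has mean `1` under `p_Y`,
so the denominator has mean `W - 1`, and Jensen for the concave `log` gives
`E_x ≤ log (W - 1) ≤ log W`.
-/

open Finset Real

section ProductWeights

variable {ι Y R : Type*} [Fintype ι] [DecidableEq ι] [Fintype Y] [CommSemiring R]

theorem sum_pi_prod_eq_one {q : Y → R} (hq : ∑ y, q y = 1) :
    ∑ ys : ι → Y, ∏ k, q (ys k) = 1 := by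
  rw [← Fintype.prod_sum]
  simp [hq]

theorem sum_pi_prod_mul_apply {q : Y → R} (hq : ∑ y, q y = 1)
    (f : Y → R) (i : ι) :
    ∑ ys : ι → Y, (∏ k, q (ys k)) * f (ys i) = ∑ y, q y * f y := by
  have hfactor : ∀ ys : ι → Y,
      (∏ k, q (ys k)) * f (ys i) = ∏ k, q (ys k) * if k = i then f (ys k) else 1 := by
    intro ys
    rw [prod_mul_distrib, prod_ite_eq' univ i]
    simp
  rw [sum_congr rfl fun ys _ => hfactor ys,
    ← Fintype.prod_sum fun k y => q y * if k = i then f y else 1]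
  simp [mul_ite, sum_ite_irrel, hq]

end ProductWeights

theorem sum_mul_log_div {ι : Type*} {s : Finset ι} {w v : ι → ℝ} {a : ℝ}
    (hw : ∑ i ∈ s, w i = 1) (ha : a ≠ 0) (hv : ∀ i ∈ s, v i ≠ 0) :
    ∑ i ∈ s, w i * log (a / v i) = log a - ∑ i ∈ s, w i * log (v i) := by
  rw [← one_mul (log a), ← hw, sum_mul, ← sum_sub_distrib]
  refine sum_congr rfl fun i hi => ?_
  rw [log_div ha (hv i hi), mul_sub]

theorem sum_mul_log_le_log_sum_mul {ι : Type*} {s : Finset ι} {w v : ι → ℝ}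
    (hw₀ : ∀ i ∈ s, 0 ≤ w i) (hw : ∑ i ∈ s, w i = 1) (hv : ∀ i ∈ s, 0 < v i) :
    ∑ i ∈ s, w i * log (v i) ≤ log (∑ i ∈ s, w i * v i) := by
  simpa using strictConcaveOn_log_Ioi.concaveOn.le_map_sum hw₀ hw hv

theorem sum_pi_prod_mul_log_sum_le_log_card {ι Y : Type*} [Fintype ι] [DecidableEq ι] [Nonempty ι]
    [Fintype Y] {q h : Y → ℝ} (hq₀ : ∀ y, 0 ≤ q y) (hq : ∑ y, q y = 1) (hh : ∀ y, 0 < h y)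
    (hqh : ∑ y, q y * h y = 1) :
    ∑ ys : ι → Y, (∏ k, q (ys k)) * log (∑ j, h (ys j)) ≤ log (Fintype.card ι) := by
  calc _ ≤ log (∑ ys : ι → Y, (∏ k, q (ys k)) * ∑ j, h (ys j)) :=
        sum_mul_log_le_log_sum_mul (fun ys _ => prod_nonneg fun k _ => hq₀ _)
          (sum_pi_prod_eq_one hq) fun ys _ => sum_pos (fun j _ => hh _) univ_nonempty
    _ = log (Fintype.card ι) := by
        simp_rw [mul_sum]
        rw [sum_comm]
        simp [sum_pi_prod_mul_apply hq, hqh]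

/-- Proposition 1 of the paper: with the optimal density-ratio
critic `g(x,y) = p(x,y)/(pX x · pY y)`, the contrastive loss `L_upper` whose
denominator ranges only over the `W − 1` i.i.d. negative samples gives an
upper bound on mutual information: `I ≤ log W − L_upper`. -/
theorem contrastive_upper_bound
    {X Y : Type*} [Fintype X] [Fintype Y] [Nonempty X] [Nonempty Y]
    (p : X × Y → ℝ)
    (hp_pos : ∀ xy : X × Y, 0 < p xy)
    (hp_sum : ∑ xy : X × Y, p xy = 1)
    (pX : X → ℝ) (hpX : ∀ x, pX x = ∑ y, p (x, y))
    (pY : Y → ℝ) (hpY : ∀ y, pY y = ∑ x, p (x, y))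
    (I : ℝ)
    (hI : I = ∑ x, ∑ y, p (x, y) * Real.log (p (x, y) / (pX x * pY y)))
    (g : X × Y → ℝ)
    (hg : ∀ x y, g (x, y) = p (x, y) / (pX x * pY y))
    (W : ℕ) (hW : 2 ≤ W)
    (Lupper : ℝ)
    (hLupper : Lupper = - ∑ x, ∑ ypos, p (x, ypos) *
        ∑ ys : Fin (W - 1) → Y, (∏ j, pY (ys j)) *
          Real.log (g (x, ypos) / ∑ j, g (x, ys j))) :
    I ≤ Real.log W - Lupper := by
  have hpX_pos : ∀ x, 0 < pX x := fun x =>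
    hpX x ▸ sum_pos (fun y _ => hp_pos _) univ_nonempty
  have hpY_pos : ∀ y, 0 < pY y := fun y =>
    hpY y ▸ sum_pos (fun x _ => hp_pos _) univ_nonempty
  have hg_pos : ∀ x y, 0 < g (x, y) := fun x y =>
    hg x y ▸ div_pos (hp_pos _) (mul_pos (hpX_pos x) (hpY_pos y))
  have hpY_sum : ∑ y, pY y = 1 := by
    simp only [hpY]
    rw [sum_comm, ← hp_sum, Fintype.sum_prod_type]
  have hg_mean : ∀ x, ∑ y, pY y * g (x, y) = 1 := fun x => by
    have hpY_mul_g : ∀ y, pY y * g (x, y) = p (x, y) / pX x := fun y => by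
      rw [hg]
      field_simp [(hpY_pos y).ne']
    rw [sum_congr rfl fun y _ => hpY_mul_g y, ← sum_div, ← hpX, div_self (hpX_pos x).ne']
  have : Nonempty (Fin (W - 1)) := ⟨⟨0, by omega⟩⟩
  set E : X → ℝ := fun x =>
    ∑ ys : Fin (W - 1) → Y, (∏ j, pY (ys j)) * log (∑ j, g (x, ys j))
  have hE : ∀ x, E x ≤ log W := fun x => by
    refine (sum_pi_prod_mul_log_sum_le_log_card (fun y => (hpY_pos y).le) hpY_sum
      (hg_pos x) (hg_mean x)).trans ?_
    rw [Fintype.card_fin]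
    gcongr
    · exact_mod_cast (by omega : 0 < W - 1)
    · exact_mod_cast Nat.sub_le W 1
  suffices I - log W ≤ -Lupper by linarith
  calc I - log W = ∑ x, ∑ y, p (x, y) * (log (g (x, y)) - log W) := by
        simp only [mul_sub, sum_sub_distrib, ← sum_mul, ← Fintype.sum_prod_type', hp_sum, one_mul,
          hI, hg]
    _ ≤ ∑ x, ∑ y, p (x, y) * (log (g (x, y)) - E x) := by
        gcongr with x _ y _
        · exact (hp_pos _).le
        · exact hE x
    _ = -Lupper := by
        rw [hLupper, neg_neg]
        refine sum_congr rfl fun x _ => sum_congr rfl fun y _ => ?_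
        rw [sum_mul_log_div (sum_pi_prod_eq_one hpY_sum) (hg_pos x y).ne'
          fun ys _ => (sum_pos (fun j _ => hg_pos x (ys j)) univ_nonempty).ne']
end
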